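/- arXiv:2412.01580 — 2 statements merged into one kernel-verified Lean document; each statement's English description precedes it below -/
import Mathlib

section
/- Let H be a real Hilbert space and H₁, H₂ : H → H operators. Suppose there exists γ > 0 such that the distance between SRG(H₁)⁻¹ := {z⁻¹ : z ∈ SRG(H₁)} and −chord(SRG(H₂)) (the negation of the chord-property closure of SRG(H₂)) is at least 1/γ. Then for any u₁, u₂ in the domain of the feedback relation [H₁, H₂] with yᵢ the corresponding outputs (yᵢ such that (uᵢ, yᵢ) ∈ (H₁⁻¹ + H₂)⁻¹), one has ‖y₁ − y₂‖ ≤ γ‖u₁ − u₂‖. -/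
/-!
**Statement 7** (SRG separation bound).  Let `H₁, H₂ : H → H` be operators on a real
Hilbert space and `γ > 0`, and suppose `dist(SRG(H₁)⁻¹, -chord(SRG(H₂))) ≥ 1/γ`.
Then for any `u₁, u₂` in the domain of `[H₁, H₂] = (H₁⁻¹ + H₂)⁻¹`, with `y₁, y₂` the
corresponding outputs, `‖y₁ - y₂‖ ≤ γ ‖u₁ - u₂‖`.

The distance hypothesis is expressed pointwise: for every `z ∈ SRG(H₁)` and every `w` in
the chord-closure of `SRG(H₂)`, the distance from `z⁻¹` to `-w` is at least `1/γ`; a point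
`z = 0` of `SRG(H₁)` inverts to `∞`, which is at infinite distance from every finite
point, so it is excluded by the guard `z ≠ 0`.
-/

open InnerProductGeometry

variable {H : Type*} [NormedAddCommGroup H] [InnerProductSpace ℝ H]

/-- The Scaled Relative Graph of a relation `R ⊆ H × H` (finite part). -/
noncomputable def srg (R : Set (H × H)) : Set ℂ :=
  {w | ∃ u₁ y₁ u₂ y₂, (u₁, y₁) ∈ R ∧ (u₂, y₂) ∈ R ∧ u₁ ≠ u₂ ∧
    (w = (‖y₁ - y₂‖ / ‖u₁ - u₂‖ : ℝ) *
        Complex.exp (Complex.I * (angle (u₁ - u₂) (y₁ - y₂) : ℝ)) ∨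
     w = (‖y₁ - y₂‖ / ‖u₁ - u₂‖ : ℝ) *
        Complex.exp (-(Complex.I * (angle (u₁ - u₂) (y₁ - y₂) : ℝ))))}

/-- A set `G ⊆ ℂ` satisfies the chord property if for each `z ∈ G` the segment between
`z` and its conjugate lies in `G`. -/
def ChordProperty (G : Set ℂ) : Prop :=
  ∀ z ∈ G, ∀ l ∈ Set.Icc (0 : ℝ) 1,
    (l : ℂ) * z + (1 - (l : ℂ)) * (starRingEnd ℂ) z ∈ G

/-- The chord-property closure: the smallest superset with the chord property. -/
def chordClosure (G : Set ℂ) : Set ℂ := ⋂₀ {S | G ⊆ S ∧ ChordProperty S}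

/-- The graph of an operator. -/
def graphOf (F : H → H) : Set (H × H) := {p | p.2 = F p.1}

/-- Relational inverse. -/
def relInv (R : Set (H × H)) : Set (H × H) := {p | (p.2, p.1) ∈ R}

/-- Relational sum. -/
def relAdd (R S : Set (H × H)) : Set (H × H) :=
  {p | ∃ y z, (p.1, y) ∈ R ∧ (p.1, z) ∈ S ∧ p.2 = y + z}

/-- The feedback relation `[H₁, H₂] := (H₁⁻¹ + H₂)⁻¹`. -/
def feedbackRel (H₁ H₂ : H → H) : Set (H × H) :=
  relInv (relAdd (relInv (graphOf H₁)) (graphOf H₂))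

/-!
Write `y = H₁ e` and `u = e + H₂ y`, and measure every increment against `d = Δy`: a vector `x`
becomes the complex number `srgPoint d x = (‖x‖/‖d‖) e^{i∠(d, x)}`. Its real part `⟪d, x⟫/‖d‖²` is
linear in `x`, its imaginary part `‖x⊥‖/‖d‖` (with `x⊥` the component of `x` orthogonal to `d`)
is a seminorm, and its modulus is `‖x‖/‖d‖`. Inverting the conjugate SRG point of `H₁` at
`(Δe, Δy)` gives `srgPoint d Δe`, while `srgPoint d (ΔH₂ y)` is an SRG point of `H₂`. By the
reverse triangle inequality for `x ↦ ‖x⊥‖`, some point on the chord joining `srgPoint d (ΔH₂ y)`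
to its conjugate adds to `srgPoint d Δe` to give exactly `srgPoint d Δu`, of modulus
`‖Δu‖/‖Δy‖`; the separation hypothesis bounds this from below by `1/γ`.
-/

open ComplexConjugate
open scoped RealInnerProductSpace

noncomputable def srgPoint (u y : H) : ℂ :=
  (‖y‖ / ‖u‖ : ℝ) * Complex.exp (Complex.I * (angle u y : ℝ))

lemma conj_srgPoint (u y : H) :
    conj (srgPoint u y) =
      (‖y‖ / ‖u‖ : ℝ) * Complex.exp (-(Complex.I * (angle u y : ℝ))) := by
  rw [srgPoint, map_mul, Complex.conj_ofReal, ← Complex.exp_conj, map_mul, Complex.conj_I,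
    Complex.conj_ofReal, neg_mul]

lemma srgPoint_mem_srg_graphOf (F : H → H) {u₁ u₂ : H} (hu : u₁ ≠ u₂) :
    srgPoint (u₁ - u₂) (F u₁ - F u₂) ∈ srg (graphOf F) :=
  ⟨u₁, F u₁, u₂, F u₂, rfl, rfl, hu, Or.inl rfl⟩

lemma conj_srgPoint_mem_srg_graphOf (F : H → H) {u₁ u₂ : H} (hu : u₁ ≠ u₂) :
    conj (srgPoint (u₁ - u₂) (F u₁ - F u₂)) ∈ srg (graphOf F) :=
  ⟨u₁, F u₁, u₂, F u₂, rfl, rfl, hu, Or.inr (conj_srgPoint _ _)⟩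

lemma norm_srgPoint (u y : H) : ‖srgPoint u y‖ = ‖y‖ / ‖u‖ := by
  rw [srgPoint, norm_mul, mul_comm Complex.I, Complex.norm_exp_ofReal_mul_I, mul_one,
    Complex.norm_real, Real.norm_of_nonneg (by positivity)]

lemma srgPoint_ne_zero {u y : H} (hu : u ≠ 0) (hy : y ≠ 0) : srgPoint u y ≠ 0 := by
  rw [← norm_pos_iff, norm_srgPoint]
  exact div_pos (norm_pos_iff.2 hy) (norm_pos_iff.2 hu)

lemma inv_conj_srgPoint (u y : H) : (conj (srgPoint u y))⁻¹ = srgPoint y u := by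
  rw [conj_srgPoint, srgPoint, angle_comm, mul_inv, ← Complex.ofReal_inv, inv_div,
    ← Complex.exp_neg, neg_neg]

lemma srgPoint_re (d x : H) : (srgPoint d x).re = ⟪d, x⟫ / ‖d‖ ^ 2 := by
  rw [srgPoint, mul_comm Complex.I, Complex.re_ofReal_mul, Complex.exp_ofReal_mul_I_re,
    ← cos_angle_mul_norm_mul_norm]
  rcases eq_or_ne ‖d‖ 0 with hd | hd
  · simp [hd]
  · field_simp

lemma norm_starProjection_orthogonal_singleton (d x : H) :
    ‖(ℝ ∙ d)ᗮ.starProjection x‖ = ‖x‖ * Real.sin (angle d x) := by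
  have hproj : ‖(ℝ ∙ d).starProjection x‖ = ‖x‖ * |Real.cos (angle d x)| := by
    rcases eq_or_ne d 0 with rfl | hd
    · simp [angle_zero_left]
    rw [Submodule.starProjection_singleton, norm_smul, ← cos_angle_mul_norm_mul_norm]
    have := norm_pos_iff.2 hd
    simp only [RCLike.ofReal_real_eq_id, id, Real.norm_eq_abs, abs_div, abs_mul, abs_pow,
      abs_norm]
    field_simp
  have hpyth := Submodule.norm_sq_eq_add_norm_sq_starProjection x (ℝ ∙ d)
  rw [hproj, mul_pow, sq_abs] at hpyth
  refine (pow_left_inj₀ (norm_nonneg _) (mul_nonneg (norm_nonneg x) (sin_angle_nonneg d x))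
    two_ne_zero).1 ?_
  rw [mul_pow, Real.sin_sq]
  linear_combination -hpyth

lemma srgPoint_im (d x : H) : (srgPoint d x).im = ‖(ℝ ∙ d)ᗮ.starProjection x‖ / ‖d‖ := by
  rw [srgPoint, mul_comm Complex.I, Complex.im_ofReal_mul, Complex.exp_ofReal_mul_I_im,
    norm_starProjection_orthogonal_singleton]
  ring

lemma mem_chordClosure_of_re_eq {G : Set ℂ} {p w : ℂ} (hp : p ∈ G) (hre : w.re = p.re)
    (him : |w.im| ≤ |p.im|) : w ∈ chordClosure G := by
  rintro S ⟨hGS, hS⟩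
  have hratio : |w.im / p.im| ≤ 1 := by
    rw [abs_div]; exact div_le_one_of_le₀ him (abs_nonneg _)
  -- the chord point with parameter `l` is `p.re + (2l - 1) p.im i`
  have hl : (1 + w.im / p.im) / 2 ∈ Set.Icc (0 : ℝ) 1 := by
    constructor <;> linarith [abs_le.1 hratio]
  convert hS p (hGS hp) _ hl using 1
  apply Complex.ext
  · simp only [Complex.add_re, Complex.mul_re, Complex.sub_re,
      Complex.one_re, Complex.ofReal_re, Complex.sub_im, Complex.one_im, Complex.ofReal_im,
      Complex.conj_re, hre]
    ring
  · simp only [Complex.add_im, Complex.mul_im, Complex.ofReal_re, Complex.ofReal_im,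
      Complex.conj_re, Complex.conj_im, Complex.sub_re, Complex.sub_im, Complex.one_re,
      Complex.one_im]
    rcases eq_or_ne p.im 0 with h0 | h0
    · simp only [h0, abs_zero, abs_nonpos_iff] at him
      simp [him, h0]
    · field_simp
      ring

lemma exists_mem_chordClosure_norm_srgPoint_add_eq {G : Set ℂ} {d y : H} (x : H)
    (hy : srgPoint d y ∈ G) :
    ∃ w ∈ chordClosure G, ‖srgPoint d x + w‖ = ‖x + y‖ / ‖d‖ := by
  refine ⟨⟨(srgPoint d y).re, (srgPoint d (x + y)).im - (srgPoint d x).im⟩,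
    mem_chordClosure_of_re_eq hy rfl ?_, ?_⟩
  · set P := (ℝ ∙ d)ᗮ.starProjection
    rw [srgPoint_im, srgPoint_im, srgPoint_im, map_add, ← sub_div, abs_div,
      abs_of_nonneg (norm_nonneg d), abs_div, abs_norm, abs_of_nonneg (norm_nonneg d)]
    gcongr
    simpa only [add_sub_cancel_left] using abs_norm_sub_norm_le (P x + P y) (P x)
  · rw [← norm_srgPoint d (x + y)]
    congr 1
    apply Complex.ext
    · simp only [Complex.add_re, srgPoint_re, inner_add_right, add_div]
    · simp

lemma mem_feedbackRel {E : Type*} [NormedAddCommGroup E] {H₁ H₂ : E → E} {u y : E} :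
    (u, y) ∈ feedbackRel H₁ H₂ ↔ ∃ e, y = H₁ e ∧ u = e + H₂ y := by
  constructor
  · rintro ⟨e, v, he, hv, hu⟩
    exact ⟨e, he, hv ▸ hu⟩
  · rintro ⟨e, he, hu⟩
    exact ⟨e, H₂ y, he, rfl, hu⟩

theorem srg_separation_bound (H₁ H₂ : H → H) (γ : ℝ) (hγ : 0 < γ)
    (hsep : ∀ z ∈ srg (graphOf H₁), z ≠ 0 →
      ∀ w ∈ chordClosure (srg (graphOf H₂)), 1 / γ ≤ ‖z⁻¹ - (-w)‖) :
    ∀ u₁ y₁ u₂ y₂ : H,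
      (u₁, y₁) ∈ feedbackRel H₁ H₂ → (u₂, y₂) ∈ feedbackRel H₁ H₂ →
      ‖y₁ - y₂‖ ≤ γ * ‖u₁ - u₂‖ := by
  intro u₁ y₁ u₂ y₂ h₁ h₂
  obtain ⟨e₁, rfl, rfl⟩ := mem_feedbackRel.1 h₁
  obtain ⟨e₂, rfl, rfl⟩ := mem_feedbackRel.1 h₂
  rcases eq_or_ne (H₁ e₁) (H₁ e₂) with hy | hy
  · rw [hy, sub_self, norm_zero]
    positivity
  have he : e₁ ≠ e₂ := ne_of_apply_ne H₁ hy
  obtain ⟨w, hw, hnorm⟩ := exists_mem_chordClosure_norm_srgPoint_add_eq (e₁ - e₂)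
    (srgPoint_mem_srg_graphOf H₂ hy)
  have hbound := hsep _ (conj_srgPoint_mem_srg_graphOf H₁ he)
    ((map_ne_zero _).2 (srgPoint_ne_zero (sub_ne_zero.2 he) (sub_ne_zero.2 hy))) w hw
  rw [inv_conj_srgPoint, sub_neg_eq_add, hnorm, ← add_sub_add_comm,
    div_le_div_iff₀ hγ (norm_pos_iff.2 (sub_ne_zero.2 hy))] at hbound
  linarith
end

section
/- Let ψ : (−π/2, π/2) → ℝ be ψ(x) = x − tan(x), and define the operator Ψ on the set D ⊆ L²([0,∞); ℝ) of functions taking values in (−π/2, π/2) by (Ψy)(t) = ψ(y(t)). Then Ψ⁻¹ (equivalently, the unity negative feedback interconnection of N(u)(t) = −arctan(u(t))) has infinite incremental gain: for every γ > 0 there exist y₁, y₂ ∈ D with Ψy₁, Ψy₂ ∈ L², Ψy₁ ≠ Ψy₂, and ‖y₁ − y₂‖ > γ‖Ψy₁ − Ψy₂‖. In particular such y₁, y₂ may be chosen as constant multiples of the indicator function of [0, 1]. -/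
/-!
**Statement 15.**  Let `ψ(x) = x - tan x` on `(-π/2, π/2)` and let `Ψ` be the induced
static operator on the set `D ⊆ L²([0,∞); ℝ)` of signals with values in `(-π/2, π/2)`.
Then `Ψ⁻¹` (the unity negative feedback interconnection of `N(u)(t) = -arctan (u t)`)
has infinite incremental gain: for every `γ > 0` there exist `y₁, y₂ ∈ D` with
`Ψy₁, Ψy₂ ∈ L²`, `Ψy₁ ≠ Ψy₂` and `‖y₁ - y₂‖ > γ ‖Ψy₁ - Ψy₂‖`; moreover `y₁, y₂` may be
chosen as constant multiples of the indicator function of `[0, 1]`.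
-/

open MeasureTheory Real

noncomputable section

/-- Lebesgue measure restricted to `[0, ∞)`. -/
def mu0 : Measure ℝ := volume.restrict (Set.Ici 0)

/-- `L²` membership. -/
def InL2 (u : ℝ → ℝ) : Prop := MemLp u 2 mu0

/-- `ψ(x) = x - tan x`. -/
def psi (x : ℝ) : ℝ := x - Real.tan x

/-- The static operator `(Ψ y)(t) = ψ (y t)`. -/
def Psi (y : ℝ → ℝ) : ℝ → ℝ := fun t => psi (y t)

/-! Since `ψ'(0) = 1 - sec² 0 = 0`, `ψ(a) = o(a)` as `a → 0`. Taking `y₁ = a · 1_[0,1]` and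
`y₂ = 0`, the ratio `‖y₁ - y₂‖ / ‖Ψy₁ - Ψy₂‖ = a / |ψ(a)|` is therefore unbounded. -/

open Filter Topology Set

lemma psi_zero : psi 0 = 0 := by simp [psi]

lemma psi_neg {x : ℝ} (h0 : 0 < x) (h1 : x < π / 2) : psi x < 0 :=
  sub_neg.mpr (lt_tan h0 h1)

lemma hasDerivAt_psi_zero : HasDerivAt psi 0 0 := by
  have h := (hasDerivAt_id (0 : ℝ)).sub (hasDerivAt_tan (by simp : cos 0 ≠ 0))
  norm_num at h
  exact h

lemma psi_isLittleO_id : psi =o[𝓝 0] fun x => x := by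
  simpa [psi_zero] using hasDerivAt_psi_zero.isLittleO

lemma exists_mul_abs_psi_lt (γ : ℝ) : ∃ a ∈ Ioo 0 (π / 2), γ * |psi a| < a := by
  have hc : 0 < 1 / (2 * (|γ| + 1)) := by positivity
  have hsmall : ∀ᶠ x in 𝓝[>] 0, ‖psi x‖ ≤ 1 / (2 * (|γ| + 1)) * ‖x‖ :=
    nhdsWithin_le_nhds (psi_isLittleO_id.def hc)
  obtain ⟨a, ha, hbound⟩ :=
    (Eventually.and (Ioo_mem_nhdsGT (by positivity : (0 : ℝ) < π / 2)) hsmall).exists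
  refine ⟨a, ha, ?_⟩
  rw [Real.norm_eq_abs, Real.norm_eq_abs, abs_of_pos ha.1] at hbound
  calc γ * |psi a| ≤ (|γ| + 1) * |psi a| := by gcongr; linarith [le_abs_self γ]
    _ ≤ (|γ| + 1) * (1 / (2 * (|γ| + 1)) * a) := by gcongr
    _ = a / 2 := by field_simp
    _ < a := half_lt_self ha.1

lemma Psi_indicator_const (s : Set ℝ) (c : ℝ) :
    Psi (s.indicator fun _ => c) = s.indicator fun _ => psi c :=
  (indicator_comp_of_zero psi_zero).symm

lemma mu0_Icc_zero_one : mu0 (Icc 0 1) = 1 := by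
  rw [mu0, Measure.restrict_apply measurableSet_Icc,
    inter_eq_left.mpr Icc_subset_Ici_self, Real.volume_Icc]
  norm_num

lemma memLp_indicator_Icc_const (c : ℝ) : InL2 ((Icc 0 1).indicator fun _ => c) :=
  memLp_indicator_const 2 measurableSet_Icc c (.inr (by simp [mu0_Icc_zero_one]))

lemma eLpNorm_indicator_Icc_const (c : ℝ) :
    eLpNorm ((Icc 0 1).indicator fun _ => c) 2 mu0 = ENNReal.ofReal |c| := by
  rw [eLpNorm_indicator_const measurableSet_Icc (by norm_num) (by norm_num), mu0_Icc_zero_one]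
  simp [Real.enorm_eq_ofReal_abs]

lemma indicator_const_mem {α β : Type*} [Zero β] {s : Set α} {T : Set β} {c : β} (hc : c ∈ T)
    (h0 : 0 ∈ T) (t : α) : s.indicator (fun _ => c) t ∈ T := by
  by_cases ht : t ∈ s <;> simp [ht, hc, h0]

lemma eLpNorm_indicator_Icc_const_sub (a b : ℝ) :
    eLpNorm (((Icc 0 1).indicator fun _ => a) - (Icc 0 1).indicator fun _ => b) 2 mu0 =
      ENNReal.ofReal |a - b| := by
  rw [← indicator_sub']
  exact eLpNorm_indicator_Icc_const (a - b)

lemma not_indicator_Icc_const_ae_eq {a b : ℝ} (hab : a ≠ b) :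
    ¬ ((Icc 0 1).indicator fun _ => a) =ᵐ[mu0] (Icc 0 1).indicator fun _ => b := by
  intro h
  have hnorm := eLpNorm_congr_ae (p := 2) h.sub_eq
  rw [eLpNorm_indicator_Icc_const_sub, eLpNorm_zero, ENNReal.ofReal_eq_zero, abs_nonpos_iff,
    sub_eq_zero] at hnorm
  exact hab hnorm

theorem psi_inv_infinite_incremental_gain :
    ∀ γ : ℝ, 0 < γ → ∃ y₁ y₂ : ℝ → ℝ,
      -- `y₁, y₂` are constant multiples of the indicator function of `[0, 1]`
      (∃ a b : ℝ, y₁ = Set.indicator (Set.Icc (0 : ℝ) 1) (fun _ => a) ∧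
                  y₂ = Set.indicator (Set.Icc (0 : ℝ) 1) (fun _ => b)) ∧
      -- `y₁, y₂ ∈ D`: they lie in `L²` and take values in `(-π/2, π/2)`
      InL2 y₁ ∧ InL2 y₂ ∧
      (∀ t, y₁ t ∈ Set.Ioo (-(π / 2)) (π / 2)) ∧
      (∀ t, y₂ t ∈ Set.Ioo (-(π / 2)) (π / 2)) ∧
      -- `Ψy₁, Ψy₂ ∈ L²` and `Ψy₁ ≠ Ψy₂`
      InL2 (Psi y₁) ∧ InL2 (Psi y₂) ∧ ¬ Psi y₁ =ᵐ[mu0] Psi y₂ ∧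
      -- `‖y₁ - y₂‖ > γ ‖Ψy₁ - Ψy₂‖`
      ENNReal.ofReal γ * eLpNorm (Psi y₁ - Psi y₂) 2 mu0 <
        eLpNorm (y₁ - y₂) 2 mu0 := by
  intro γ hγ
  obtain ⟨a, ha, hgain⟩ := exists_mul_abs_psi_lt γ
  have hzero_mem : (0 : ℝ) ∈ Ioo (-(π / 2)) (π / 2) := ⟨by linarith [pi_pos], by positivity⟩
  have ha_mem : a ∈ Ioo (-(π / 2)) (π / 2) := ⟨by linarith [ha.1, pi_pos], ha.2⟩
  refine ⟨_, _, ⟨a, 0, rfl, rfl⟩, memLp_indicator_Icc_const a, memLp_indicator_Icc_const 0,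
    indicator_const_mem ha_mem hzero_mem, indicator_const_mem hzero_mem hzero_mem, ?_⟩
  simp only [Psi_indicator_const, eLpNorm_indicator_Icc_const_sub, psi_zero]
  refine ⟨memLp_indicator_Icc_const _, memLp_indicator_Icc_const _,
    not_indicator_Icc_const_ae_eq (psi_neg ha.1 ha.2).ne, ?_⟩
  rw [← ENNReal.ofReal_mul hγ.le, ENNReal.ofReal_lt_ofReal_iff (by simpa using ha.1.ne'), sub_zero,
    sub_zero, abs_of_pos ha.1]
  exact hgain

end
end
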